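/- arXiv:0903.3100 — 7 statements merged into one kernel-verified Lean document; each statement's English description precedes it below -/
import Mathlib

section
/- The function f(N) = N · ln(1 - exp(-βN)) defined for N > 0 (with β > 0 fixed) attains its unique minimum at N = (ln 2)/β. -/
open Real Set

/-!
Substituting `u = exp (-β N) ∈ (0, 1)` turns `N * log (1 - exp (-β N))` into
`-(log u * log (1 - u)) / β`, so it suffices to show that `g u = log u * log (1 - u)`,
which is symmetric under `u ↦ 1 - u`, has its strict maximum `(log 2) ^ 2` at `u = 1/2`.
On `(0, 1/2]` the derivative of `g` has the sign of `(1 - u) log (1 - u) - u log u`,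
which is positive by two applications of `log x < x - 1`.
-/

lemma mul_log_lt_one_sub_mul_log_one_sub {u : ℝ} (hu₀ : 0 < u) (hu : u < 1 / 2) :
    u * log u < (1 - u) * log (1 - u) := by
  have hv : 0 < 1 - u := by linarith
  have hratio : log (u / (1 - u)) < u / (1 - u) - 1 :=
    log_lt_sub_one_of_pos (by positivity) fun h => by
      rw [div_eq_one_iff_eq hv.ne'] at h; linarith
  have hinv : log (1 / (1 - u)) ≤ 1 / (1 - u) - 1 := log_le_sub_one_of_pos (by positivity)
  rw [log_div hu₀.ne' hv.ne'] at hratio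
  rw [log_div one_ne_zero hv.ne', log_one] at hinv
  -- `u * log u - (1 - u) * log (1 - u) = u * log (u / (1 - u)) + (1 - 2u) * log (1 / (1 - u))`
  have key : u * (log u - log (1 - u)) + (1 - 2 * u) * (0 - log (1 - u)) < 0 := calc
    _ < u * (u / (1 - u) - 1) + (1 - 2 * u) * (1 / (1 - u) - 1) :=
      add_lt_add_of_lt_of_le (mul_lt_mul_of_pos_left hratio hu₀)
        (mul_le_mul_of_nonneg_left hinv (by linarith))
    _ = 0 := by field_simp; ring
  linarith

lemma strictMonoOn_log_mul_log_one_sub :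
    StrictMonoOn (fun u : ℝ => log u * log (1 - u)) (Ioc 0 (1 / 2)) := by
  apply strictMonoOn_of_deriv_pos (convex_Ioc _ _)
  · intro x ⟨hx₀, hx⟩
    have hx₀ : x ≠ 0 := hx₀.ne'
    have hv : 1 - x ≠ 0 := by linarith
    exact ContinuousAt.continuousWithinAt (by fun_prop (disch := assumption))
  · intro x hx
    rw [interior_Ioc] at hx
    obtain ⟨hx₀, hx⟩ := hx
    have hv : 0 < 1 - x := by linarith
    have hderiv : HasDerivAt (fun u => log u * log (1 - u))
        (1 / x * log (1 - x) + log x * (-1 / (1 - x))) x :=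
      ((hasDerivAt_id' x).log hx₀.ne').mul (((hasDerivAt_id' x).const_sub 1).log hv.ne')
    have hform : 1 / x * log (1 - x) + log x * (-1 / (1 - x)) =
        ((1 - x) * log (1 - x) - x * log x) / (x * (1 - x)) := by
      field_simp
      ring
    rw [hderiv.deriv, hform]
    exact div_pos (by linarith [mul_log_lt_one_sub_mul_log_one_sub hx₀ hx]) (by positivity)

lemma log_half_mul_log_one_sub_half : log (1 / 2) * log (1 - 1 / 2) = log 2 ^ 2 := by
  rw [show (1 : ℝ) - 1 / 2 = 1 / 2 by norm_num, one_div, log_inv, neg_mul_neg, sq]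

lemma log_mul_log_one_sub_lt {u : ℝ} (hu₀ : 0 < u) (hu₁ : u < 1) (hu : u ≠ 1 / 2) :
    log u * log (1 - u) < log 2 ^ 2 := by
  have below_half : ∀ v : ℝ, 0 < v → v < 1 / 2 → log v * log (1 - v) < log 2 ^ 2 := by
    intro v hv₀ hv
    have := strictMonoOn_log_mul_log_one_sub ⟨hv₀, hv.le⟩ ⟨by norm_num, le_rfl⟩ hv
    rwa [← log_half_mul_log_one_sub_half]
  rcases hu.lt_or_gt with hlt | hgt
  · exact below_half u hu₀ hlt
  · simpa [mul_comm] using below_half (1 - u) (by linarith) (by linarith)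

lemma mul_log_one_sub_exp_neg_mul {β : ℝ} (hβ : β ≠ 0) (N : ℝ) :
    N * log (1 - exp (-β * N)) = -(log (exp (-β * N)) * log (1 - exp (-β * N))) / β := by
  rw [log_exp]
  field_simp

/-- The function `f(N) = N · ln(1 - exp(-βN))` on `N > 0` (with `β > 0`) attains its
unique minimum at `N = (ln 2)/β`. -/
theorem stmt2 (β : ℝ) (hβ : 0 < β) :
    ∀ N : ℝ, 0 < N → N ≠ Real.log 2 / β →
      (Real.log 2 / β) * Real.log (1 - Real.exp (-β * (Real.log 2 / β))) <
        N * Real.log (1 - Real.exp (-β * N)) := by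
  intro N hN hN₀
  have hmin : exp (-β * (log 2 / β)) = 1 / 2 := by
    rw [neg_mul, mul_div_cancel₀ _ hβ.ne', exp_neg, exp_log two_pos, one_div]
  have hu₁ : exp (-β * N) < 1 := exp_lt_one_iff.mpr (by nlinarith)
  have hu : exp (-β * N) ≠ 1 / 2 :=
    hmin ▸ exp_injective.ne ((mul_right_injective₀ (neg_ne_zero.mpr hβ.ne')).ne hN₀)
  rw [mul_log_one_sub_exp_neg_mul hβ.ne', mul_log_one_sub_exp_neg_mul hβ.ne', hmin,
    log_half_mul_log_one_sub_half]
  exact div_lt_div_of_pos_right (neg_lt_neg (log_mul_log_one_sub_lt (exp_pos _) hu₁ hu)) hβ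
end

section
/- Define φ(λ) = Σ_{i=1}^P (τ_i/T) ⌊ln(T ε_i/(τ_i λ))⌋⁺ - 1 for λ > 0, where ⌊x⌋⁺ = max(x,0). Then φ is continuous, strictly decreasing on the region where it is positive, satisfies φ(λ) → +∞ as λ → 0⁺ and φ(λ) = -1 for λ ≥ max_i T ε_i/τ_i, and hence the equation φ(λ) = 0 has a unique solution λ* > 0. -/
open Real Filter

/-!
With `wᵢ = τᵢ/T` and `cᵢ = T εᵢ/τᵢ`, `φ λ = ∑ wᵢ log⁺ (cᵢ/λ) - 1`. Each summand is continuous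
and antitone in `λ`, strictly decreasing while positive, and vanishes once `λ ≥ cᵢ`; each blows
up as `λ → 0⁺`. Since `(0, ∞)` is connected, `φ` takes every value in `[-1, ∞)`, in particular
`0`; and since the sum is strictly decreasing wherever it is positive, it takes the value `1`
only once.
-/

open Set

noncomputable def waterFilling {ι : Type*} [Fintype ι] (w c : ι → ℝ) (l : ℝ) : ℝ :=
  ∑ i, w i * log⁺ (c i / l)

section WaterFilling

variable {ι : Type*} [Fintype ι] (w c : ι → ℝ)

theorem continuousOn_waterFilling : ContinuousOn (waterFilling w c) (Ioi 0) :=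
  continuousOn_finsetSum _ fun _ _ => continuousOn_const.mul <|
    continuous_posLog.comp_continuousOn <|
      continuousOn_const.div continuousOn_id fun _ hl => (mem_Ioi.mp hl).ne'

variable {w c}

theorem waterFilling_strictAntiOn (hw : ∀ i, 0 ≤ w i) (hc : ∀ i, 0 ≤ c i) :
    StrictAntiOn (waterFilling w c) {l | 0 < l ∧ 0 < waterFilling w c l} := by
  rintro a ⟨ha, -⟩ b ⟨hb, hSb⟩ hab
  obtain ⟨j, hj⟩ : ∃ j, 0 < w j * log⁺ (c j / b) := by
    by_contra! h
    exact hSb.not_ge (Finset.sum_nonpos fun i _ => h i)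
  have hwj : 0 < w j := pos_of_mul_pos_left hj posLog_nonneg
  have hlog : 0 < log (c j / b) := by
    simpa [posLog_apply] using pos_of_mul_pos_right hj (hw j)
  have hbc : b < c j := (one_lt_div hb).mp ((log_pos_iff (div_nonneg (hc j) hb.le)).mp hlog)
  refine Finset.sum_lt_sum (fun i _ => ?_) ⟨j, Finset.mem_univ j, ?_⟩
  · exact mul_le_mul_of_nonneg_left (posLog_le_posLog (div_nonneg (hc i) hb.le)
      (div_le_div_of_nonneg_left (hc i) ha hab.le)) (hw i)
  · refine mul_lt_mul_of_pos_left ?_ hwj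
    calc log⁺ (c j / b) = log (c j / b) := max_eq_right hlog.le
      _ < log (c j / a) := log_lt_log (div_pos (hb.trans hbc) hb)
          (div_lt_div_of_pos_left (hb.trans hbc) ha hab)
      _ ≤ log⁺ (c j / a) := le_max_right _ _

theorem tendsto_waterFilling_nhdsGT_zero (hw : ∀ i, 0 ≤ w i) {j : ι} (hwj : 0 < w j)
    (hcj : 0 < c j) : Tendsto (waterFilling w c) (nhdsWithin 0 (Ioi 0)) atTop := by
  have hdiv : Tendsto (fun l => c j / l) (nhdsWithin 0 (Ioi 0)) atTop := by
    simpa only [div_eq_mul_inv] using tendsto_inv_nhdsGT_zero.const_mul_atTop hcj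
  have hterm : Tendsto (fun l => w j * log⁺ (c j / l)) (nhdsWithin 0 (Ioi 0)) atTop :=
    ((tendsto_atTop_mono (fun _ => le_max_right _ _) tendsto_log_atTop).comp hdiv).const_mul_atTop
      hwj
  refine tendsto_atTop_mono (fun l => ?_) hterm
  exact Finset.single_le_sum (f := fun i => w i * log⁺ (c i / l))
    (fun i _ => mul_nonneg (hw i) posLog_nonneg) (Finset.mem_univ j)

theorem waterFilling_eq_zero {l : ℝ} (hc : ∀ i, 0 ≤ c i) (hl : ∀ i, c i ≤ l) :
    waterFilling w c l = 0 := by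
  refine Finset.sum_eq_zero fun i _ => ?_
  have hl₀ : 0 ≤ l := (hc i).trans (hl i)
  rw [(posLog_eq_zero_iff _).mpr, mul_zero]
  rw [abs_of_nonneg (div_nonneg (hc i) hl₀)]
  exact div_le_one_of_le₀ (hl i) hl₀

end WaterFilling

/-- Properties of the water-filling function
`φ(λ) = Σ_i (τ_i/T) ⌊ln(T ε_i/(τ_i λ))⌋⁺ - 1`: continuity on `(0,∞)`, strict decrease
on the region where it is positive, divergence to `+∞` at `0⁺`, value `-1` for
`λ ≥ max_i T ε_i/τ_i`, and existence and uniqueness of a positive zero. -/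
theorem stmt6 (P : ℕ) (hP : 1 ≤ P) (T : ℝ) (hT : 0 < T)
    (ε τ : Fin P → ℝ) (hε : ∀ i, 0 < ε i) (hτ : ∀ i, 0 < τ i) :
    haveI : NeZero P := ⟨by omega⟩
    let φ : ℝ → ℝ := fun l =>
      (∑ i, (τ i / T) * max (Real.log (T * ε i / (τ i * l))) 0) - 1
    ContinuousOn φ (Set.Ioi 0) ∧
    StrictAntiOn φ {l : ℝ | 0 < l ∧ 0 < φ l} ∧
    Tendsto φ (nhdsWithin 0 (Set.Ioi 0)) atTop ∧
    (∀ l : ℝ, (Finset.univ.sup' (Finset.univ_nonempty) fun i => T * ε i / τ i) ≤ l →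
      φ l = -1) ∧
    ∃! l : ℝ, 0 < l ∧ φ l = 0 := by
  have : NeZero P := ⟨by omega⟩
  intro φ
  set w : Fin P → ℝ := fun i => τ i / T
  set c : Fin P → ℝ := fun i => T * ε i / τ i
  have hw i : 0 < w i := div_pos (hτ i) hT
  have hc i : 0 < c i := div_pos (mul_pos hT (hε i)) (hτ i)
  have hφ : φ = fun l => waterFilling w c l - 1 := by
    funext l
    simp only [φ, waterFilling, w, c, posLog_apply, max_comm (0 : ℝ), div_mul_eq_div_div]
  rw [hφ]
  have hS := waterFilling_strictAntiOn (fun i => (hw i).le) (fun i => (hc i).le)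
  have hcont : ContinuousOn (fun l => waterFilling w c l - 1) (Ioi 0) :=
    (continuousOn_waterFilling w c).sub continuousOn_const
  have htop := tendsto_atTop_add_const_right _ (-1)
    (tendsto_waterFilling_nhdsGT_zero (fun i => (hw i).le) (hw 0) (hc 0))
  simp only [← sub_eq_add_neg] at htop
  set M := Finset.univ.sup' Finset.univ_nonempty c
  have hflat (l : ℝ) (hl : M ≤ l) : waterFilling w c l - 1 = -1 := by
    rw [waterFilling_eq_zero (fun i => (hc i).le)
      fun i => (Finset.le_sup' c (Finset.mem_univ i)).trans hl, zero_sub]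
  have hM : M ∈ Ioi 0 := (hc 0).trans_le (Finset.le_sup' c (Finset.mem_univ 0))
  obtain ⟨x, hx, hφx⟩ := isPreconnected_Ioi.intermediate_value_Ici hM
    (l := nhdsWithin 0 (Ioi 0)) inf_le_right hcont htop (show (0 : ℝ) ∈ Ici (waterFilling w c M - 1) by rw [hflat M le_rfl]; norm_num)
  refine ⟨hcont, fun a ha b hb hab => ?_, htop, hflat, x, ⟨hx, hφx⟩, ?_⟩
  · exact sub_lt_sub_right (hS ⟨ha.1, by linarith [ha.2]⟩ ⟨hb.1, by linarith [hb.2]⟩ hab) 1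
  · rintro y ⟨hy, hφy⟩
    exact hS.injOn ⟨hy, by linarith⟩ ⟨hx, by linarith⟩ (by linarith)
end

section
/- Let λ* be the unique positive solution of Σ_i (τ_i/T)⌊ln(T ε_i/(τ_i λ))⌋⁺ = 1, let I = {i : λ* < T ε_i/τ_i}, and define t_i = τ_i ln(T ε_i/(τ_i λ*)) for i ∈ I and t_i = 0 otherwise. Then t is a feasible point: t_i ≥ 0 for all i and Σ_i t_i = T. -/
open Real

theorem log_div_ite_eq_max_zero {x c : ℝ} (hx : 0 < x) (hc : 0 < c) :
    (if c < x then log (x / c) else 0) = max (log (x / c)) 0 := by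
  split_ifs with hcx
  · exact (max_eq_left (log_pos ((one_lt_div hc).2 hcx)).le).symm
  · exact (max_eq_right (log_nonpos (by positivity) ((div_le_one hc).2 (not_lt.1 hcx)))).symm

theorem stmt7_general (P : ℕ) (T : ℝ) (hT : 0 < T)
    (ε τ : Fin P → ℝ) (hε : ∀ i, 0 < ε i) (hτ : ∀ i, 0 < τ i)
    (l : ℝ) (hl : 0 < l)
    (hsol : ∑ i, (τ i / T) * max (Real.log (T * ε i / (τ i * l))) 0 = 1) :
    let t : Fin P → ℝ := fun i =>
      if l < T * ε i / τ i then τ i * Real.log (T * ε i / (τ i * l)) else 0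
    (∀ i, 0 ≤ t i) ∧ ∑ i, t i = T := by
  intro t
  have ht : ∀ i, t i = τ i * max (log (T * ε i / (τ i * l))) 0 := fun i => by
    have hx : 0 < T * ε i / τ i := by have := hε i; have := hτ i; positivity
    simp only [t, ← mul_ite_zero, ← div_div,
      log_div_ite_eq_max_zero hx hl]
  refine ⟨fun i => ht i ▸ mul_nonneg (hτ i).le (le_max_right _ _), ?_⟩
  calc ∑ i, t i = T * ∑ i, (τ i / T) * max (log (T * ε i / (τ i * l))) 0 := by
        rw [Finset.mul_sum]
        refine Finset.sum_congr rfl fun i _ => ?_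
        rw [ht i, ← mul_assoc, mul_div_cancel₀ _ hT.ne']
    _ = T := by rw [hsol, mul_one]

/-- If `λ*` solves the water-filling equation `Σ_i (τ_i/T)⌊ln(T ε_i/(τ_i λ*))⌋⁺ = 1`,
then the allocation `t_i = τ_i ln(T ε_i/(τ_i λ*))` for active `i` (those with
`λ* < T ε_i/τ_i`) and `t_i = 0` otherwise is feasible: `t_i ≥ 0` and `Σ t_i = T`. -/
theorem stmt7 (P : ℕ) (hP : 1 ≤ P) (T : ℝ) (hT : 0 < T)
    (ε τ : Fin P → ℝ) (hε : ∀ i, 0 < ε i) (hτ : ∀ i, 0 < τ i)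
    (l : ℝ) (hl : 0 < l)
    (hsol : ∑ i, (τ i / T) * max (Real.log (T * ε i / (τ i * l))) 0 = 1) :
    let t : Fin P → ℝ := fun i =>
      if l < T * ε i / τ i then τ i * Real.log (T * ε i / (τ i * l)) else 0
    (∀ i, 0 ≤ t i) ∧ ∑ i, t i = T :=
  stmt7_general P T hT ε τ hε hτ l hl hsol
end

section
/- Suppose every index is active, i.e. λ* < T ε_i/τ_i for all i. Then the optimal allocation has the closed form t_i = ( Σ_{j=1}^P τ_j ln(ε_i τ_j/(ε_j τ_i)) + T ) / ( Σ_{j=1}^P τ_j/τ_i ), and these t_i satisfy Σ_i t_i = T. -/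
/-!
On the active set every multiplier condition reads `t_i = τ_i L_i` with `L_i = ln(T ε_i/(τ_i λ*)) > 0`,
so the budget constraint becomes `Σ_j τ_j L_j = T`. The ratio `ε_i τ_j/(ε_j τ_i)` is the quotient of the
arguments of `L_i` and `L_j`, hence its logarithm is `L_i - L_j`; the numerator of the closed form is then
`Σ_j τ_j (L_i - L_j) + Σ_j τ_j L_j = L_i Σ_j τ_j`, and dividing by `Σ_j τ_j/τ_i` leaves `τ_i L_i`.
-/

open Real Finset

theorem Real.log_div_mul_div_eq_sub {T l x y x' y' : ℝ} (hT : T ≠ 0) (hl : l ≠ 0)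
    (hy : y ≠ 0) (hy' : y' ≠ 0) (h : T * x / (y * l) ≠ 0) (h' : T * x' / (y' * l) ≠ 0) :
    log (x * y' / (x' * y)) = log (T * x / (y * l)) - log (T * x' / (y' * l)) := by
  rw [← log_div h h']
  congr 1
  field_simp

theorem sum_mul_eq_of_sum_div_mul_max_eq_one {ι : Type*} [Fintype ι] {T : ℝ} (hT : T ≠ 0)
    {τ L : ι → ℝ} (hL : ∀ i, 0 ≤ L i) (h : ∑ i, τ i / T * max (L i) 0 = 1) :
    ∑ i, τ i * L i = T := by
  simp only [max_eq_left (hL _), div_mul_eq_mul_div, ← sum_div] at h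
  exact (div_eq_one_iff_eq hT).mp h

theorem sum_mul_sub_add_div_sum_div {ι K : Type*} [Fintype ι] [Field K] {τ L : ι → K} {T : K}
    (hsum : ∑ j, τ j * L j = T) {i : ι} (hτi : τ i ≠ 0) (hS : ∑ j, τ j ≠ 0) :
    (∑ j, τ j * (L i - L j) + T) / ∑ j, τ j / τ i = τ i * L i := by
  have hnum : ∑ j, τ j * (L i - L j) + T = (∑ j, τ j) * L i := by
    simp only [mul_sub, sum_sub_distrib, ← sum_mul, hsum, sub_add_cancel]
  rw [hnum, ← sum_div]
  field_simp

theorem stmt9_general (P : ℕ) (T : ℝ) (hT : 0 < T)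
    (ε τ : Fin P → ℝ) (hτ : ∀ i, 0 < τ i)
    (l : ℝ) (hl : 0 < l)
    (hsol : ∑ i, (τ i / T) * max (Real.log (T * ε i / (τ i * l))) 0 = 1)
    (hactive : ∀ i, l < T * ε i / τ i) :
    let u : Fin P → ℝ := fun i =>
      ((∑ j, τ j * Real.log (ε i * τ j / (ε j * τ i))) + T) / (∑ j, τ j / τ i)
    (∀ i, τ i * Real.log (T * ε i / (τ i * l)) = u i) ∧ ∑ i, u i = T := by
  intro u
  set L : Fin P → ℝ := fun i => log (T * ε i / (τ i * l))
  have hargs : ∀ i, 1 < T * ε i / (τ i * l) := fun i => by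
    rw [← div_div, one_lt_div hl]
    exact hactive i
  have hargs_ne : ∀ i, T * ε i / (τ i * l) ≠ 0 := fun i => (one_pos.trans (hargs i)).ne'
  have hsum : ∑ i, τ i * L i = T :=
    sum_mul_eq_of_sum_div_mul_max_eq_one hT.ne' (fun i => (log_pos (hargs i)).le) hsol
  have hu : ∀ i, u i = τ i * L i := fun i => by
    have hS : ∑ j, τ j ≠ 0 := (sum_pos (fun j _ => hτ j) ⟨i, mem_univ i⟩).ne'
    have hlog : ∀ j, log (ε i * τ j / (ε j * τ i)) = L i - L j := fun j =>
      log_div_mul_div_eq_sub hT.ne' hl.ne' (hτ i).ne' (hτ j).ne' (hargs_ne i) (hargs_ne j)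
    simp only [u, hlog]
    exact sum_mul_sub_add_div_sum_div hsum (hτ i).ne' hS
  exact ⟨fun i => (hu i).symm, by simp only [hu, hsum]⟩

/-- When every index is active (`λ* < T ε_i/τ_i` for all `i`), the optimal allocation
`t_i = τ_i ln(T ε_i/(τ_i λ*))` has the closed form
`t_i = (Σ_j τ_j ln(ε_i τ_j/(ε_j τ_i)) + T)/(Σ_j τ_j/τ_i)`, and these sum to `T`. -/
theorem stmt9 (P : ℕ) (hP : 1 ≤ P) (T : ℝ) (hT : 0 < T)
    (ε τ : Fin P → ℝ) (hε : ∀ i, 0 < ε i) (hτ : ∀ i, 0 < τ i)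
    (l : ℝ) (hl : 0 < l)
    (hsol : ∑ i, (τ i / T) * max (Real.log (T * ε i / (τ i * l))) 0 = 1)
    (hactive : ∀ i, l < T * ε i / τ i) :
    let u : Fin P → ℝ := fun i =>
      ((∑ j, τ j * Real.log (ε i * τ j / (ε j * τ i))) + T) / (∑ j, τ j / τ i)
    (∀ i, τ i * Real.log (T * ε i / (τ i * l)) = u i) ∧ ∑ i, u i = T :=
  stmt9_general P T hT ε τ hτ l hl hsol hactive
end

section
/- In the all-active closed-form allocation t_i = (Σ_j τ_j ln(ε_i τ_j/(ε_j τ_i)) + T)/(Σ_j τ_j/τ_i), the quantity (ε_i/τ_i) e^{-t_i/τ_i} is the same for all indices i (equalization of marginal detection gains). -/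
/-!
Writing `ε i τ j / (ε j τ i) = (ε i / τ i) (τ j / ε j)` splits the numerator of `t i` into
`(Σ τ) log (ε i / τ i)` plus a part independent of `i`, and the denominator is `(Σ τ) / τ i`.
Hence `t i / τ i = log (ε i / τ i) + C` with `C` independent of `i`, and the marginal gain
`(ε i / τ i) e^{-t i / τ i}` collapses to `e^{-C}`.
-/

open Real Finset

section Allocation

variable {ι : Type*} [Fintype ι] (ε τ : ι → ℝ) (T : ℝ)

noncomputable def closedFormAllocation (i : ι) : ℝ :=
  ((∑ j, τ j * log (ε i * τ j / (ε j * τ i))) + T) / (∑ j, τ j / τ i)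

variable {ε τ}

theorem sum_mul_log_ratio (hε : ∀ i, 0 < ε i) (hτ : ∀ i, 0 < τ i) (i : ι) :
    ∑ j, τ j * log (ε i * τ j / (ε j * τ i)) =
      (∑ j, τ j) * log (ε i / τ i) + ∑ j, τ j * log (τ j / ε j) := by
  rw [sum_mul, ← sum_add_distrib]
  refine sum_congr rfl fun j _ => ?_
  have hsplit : ε i * τ j / (ε j * τ i) = (ε i / τ i) * (τ j / ε j) := by
    field_simp [(hε j).ne', (hτ i).ne']
  rw [hsplit, log_mul (div_pos (hε i) (hτ i)).ne' (div_pos (hτ j) (hε j)).ne', mul_add]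

theorem closedFormAllocation_div_eq (hε : ∀ i, 0 < ε i) (hτ : ∀ i, 0 < τ i) (i : ι) :
    closedFormAllocation ε τ T i / τ i =
      log (ε i / τ i) + ((∑ j, τ j * log (τ j / ε j)) + T) / ∑ j, τ j := by
  have hS : 0 < ∑ j, τ j := sum_pos (fun j _ => hτ j) ⟨i, mem_univ i⟩
  rw [closedFormAllocation, sum_mul_log_ratio hε hτ, ← sum_div, div_div,
    div_mul_cancel₀ _ (hτ i).ne', add_assoc, add_div, mul_div_cancel_left₀ _ hS.ne']

theorem mul_exp_neg_log_add {a : ℝ} (ha : 0 < a) (c : ℝ) :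
    a * exp (-(log a + c)) = exp (-c) := by
  rw [neg_add, exp_add, exp_neg (log a), exp_log ha, mul_inv_cancel_left₀ ha.ne']

theorem marginalGain_closedFormAllocation (hε : ∀ i, 0 < ε i) (hτ : ∀ i, 0 < τ i) (i : ι) :
    (ε i / τ i) * exp (-closedFormAllocation ε τ T i / τ i) =
      exp (-(((∑ j, τ j * log (τ j / ε j)) + T) / ∑ j, τ j)) := by
  rw [neg_div, closedFormAllocation_div_eq T hε hτ, mul_exp_neg_log_add (div_pos (hε i) (hτ i))]

end Allocation

theorem stmt10_general (P : ℕ) (T : ℝ)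
    (ε τ : Fin P → ℝ) (hε : ∀ i, 0 < ε i) (hτ : ∀ i, 0 < τ i) :
    let t : Fin P → ℝ := fun i =>
      ((∑ j, τ j * Real.log (ε i * τ j / (ε j * τ i))) + T) / (∑ j, τ j / τ i)
    ∀ i j : Fin P,
      (ε i / τ i) * Real.exp (-t i / τ i) = (ε j / τ j) * Real.exp (-t j / τ j) := by
  intro t i j
  exact (marginalGain_closedFormAllocation T hε hτ i).trans
    (marginalGain_closedFormAllocation T hε hτ j).symm

/-- In the all-active closed-form allocation
`t_i = (Σ_j τ_j ln(ε_i τ_j/(ε_j τ_i)) + T)/(Σ_j τ_j/τ_i)`, the marginal gain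
`(ε_i/τ_i) e^{-t_i/τ_i}` is the same for all indices. -/
theorem stmt10 (P : ℕ) (hP : 1 ≤ P) (T : ℝ) (hT : 0 < T)
    (ε τ : Fin P → ℝ) (hε : ∀ i, 0 < ε i) (hτ : ∀ i, 0 < τ i) :
    let t : Fin P → ℝ := fun i =>
      ((∑ j, τ j * Real.log (ε i * τ j / (ε j * τ i))) + T) / (∑ j, τ j / τ i)
    ∀ i j : Fin P,
      (ε i / τ i) * Real.exp (-t i / τ i) = (ε j / τ j) * Real.exp (-t j / τ j) :=
  stmt10_general P T ε τ hε hτ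
end

section
/- Increasing the weight ε_k of a single target (holding other weights, the τ_i's and T fixed) does not decrease the optimal allocated time t_k for that target. -/
/-!
If the weight of target `k` strictly increases, comparing each optimum against the other
allocation (a revealed-preference argument) shows that the new optimum gains at least as
much saturation on target `k`; since `x ↦ 1 - exp (-x / τ)` is strictly increasing, this
means at least as much time. If the weight does not change, the two objectives coincide and
are strictly concave, so the optimum is unique.
-/

open Real Set

theorem IsMaxOn.le_of_isMaxOn_add {α β : Type*} [AddCommMonoid β] [PartialOrder β]
    [IsOrderedCancelAddMonoid β] {f g : α → β} {s : Set α} {a b : α}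
    (hf : IsMaxOn f s a) (hfg : IsMaxOn (f + g) s b) (ha : a ∈ s) (hb : b ∈ s) :
    g a ≤ g b :=
  le_of_add_le_add_left <| (isMaxOn_iff.mp hfg a ha).trans <|
    add_le_add_left (isMaxOn_iff.mp hf b hb) _

theorem strictConcaveOn_sum_mul_apply {ι : Type*} [Fintype ι] {w : ι → ℝ}
    {φ : ι → ℝ → ℝ} (hw : ∀ i, 0 < w i) (hφ : ∀ i, StrictConcaveOn ℝ univ (φ i)) :
    StrictConcaveOn ℝ univ fun s : ι → ℝ ↦ ∑ i, w i * φ i (s i) := by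
  refine ⟨convex_univ, fun x _ y _ hxy a b ha hb hab ↦ ?_⟩
  obtain ⟨k, hk⟩ := Function.ne_iff.mp hxy
  simp only [smul_eq_mul, Finset.mul_sum, ← Finset.sum_add_distrib, Pi.add_apply,
    Pi.smul_apply]
  refine Finset.sum_lt_sum (fun i _ ↦ ?_) ⟨k, Finset.mem_univ k, ?_⟩
  · have := (hφ i).concaveOn.2 (mem_univ (x i)) (mem_univ (y i)) ha.le hb.le hab
    simp only [smul_eq_mul] at this
    linear_combination mul_le_mul_of_nonneg_left this (hw i).le
  · have := (hφ k).2 (mem_univ (x k)) (mem_univ (y k)) hk ha hb hab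
    simp only [smul_eq_mul] at this
    linear_combination mul_lt_mul_of_pos_left this (hw k)

noncomputable def saturation (τ x : ℝ) : ℝ := 1 - exp (-x / τ)

theorem strictMono_saturation {τ : ℝ} (hτ : 0 < τ) : StrictMono (saturation τ) := by
  intro x y hxy
  have : -y / τ < -x / τ := div_lt_div_of_pos_right (neg_lt_neg hxy) hτ
  simpa [saturation] using exp_lt_exp.mpr this

theorem strictConcaveOn_saturation {τ : ℝ} (hτ : 0 < τ) :
    StrictConcaveOn ℝ univ (saturation τ) := by
  refine ⟨convex_univ, fun x _ y _ hxy a b ha hb hab ↦ ?_⟩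
  have hne : -x / τ ≠ -y / τ := fun h ↦ hxy (by field_simp at h; linarith)
  have hexp := strictConvexOn_exp.2 trivial trivial hne ha hb hab
  have hlin : -(a * x + b * y) / τ = a * (-x / τ) + b * (-y / τ) := by field_simp; ring
  simp only [saturation, smul_eq_mul] at hexp ⊢
  rw [hlin]
  linear_combination hexp + hab

def allocations (ι : Type*) [Fintype ι] (T : ℝ) : Set (ι → ℝ) :=
  {s | (∀ i, 0 ≤ s i) ∧ ∑ i, s i = T}

section Allocation

variable {ι : Type*} [Fintype ι]

theorem convex_allocations (T : ℝ) : Convex ℝ (allocations ι T) := by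
  rintro x ⟨hx0, hxT⟩ y ⟨hy0, hyT⟩ a b ha hb hab
  refine ⟨fun i ↦ ?_, ?_⟩
  · simp only [Pi.add_apply, Pi.smul_apply, smul_eq_mul]
    exact add_nonneg (mul_nonneg ha (hx0 i)) (mul_nonneg hb (hy0 i))
  · simp only [Pi.add_apply, Pi.smul_apply, smul_eq_mul, Finset.sum_add_distrib,
      ← Finset.mul_sum, hxT, hyT, ← add_mul, hab, one_mul]

noncomputable def weightedSaturation (ε τ s : ι → ℝ) : ℝ :=
  ∑ i, ε i * saturation (τ i) (s i)

theorem weightedSaturation_eq_add {ε ε' : ι → ℝ} (τ : ι → ℝ) {k : ι}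
    (hother : ∀ i, i ≠ k → ε' i = ε i) :
    weightedSaturation ε' τ =
      weightedSaturation ε τ + fun s ↦ (ε' k - ε k) * saturation (τ k) (s k) := by
  funext s
  rw [Pi.add_apply, ← sub_eq_iff_eq_add', weightedSaturation, weightedSaturation,
    ← Finset.sum_sub_distrib]
  refine (Finset.sum_eq_single k (fun i _ hik ↦ ?_) (by simp)).trans (sub_mul ..).symm
  rw [hother i hik, sub_self]

theorem strictConcaveOn_weightedSaturation {ε τ : ι → ℝ} (hε : ∀ i, 0 < ε i)
    (hτ : ∀ i, 0 < τ i) : StrictConcaveOn ℝ univ (weightedSaturation ε τ) :=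
  strictConcaveOn_sum_mul_apply hε fun i ↦ strictConcaveOn_saturation (hτ i)

end Allocation

theorem stmt12_general (P : ℕ) (T : ℝ)
    (ε ε' τ : Fin P → ℝ) (hε : ∀ i, 0 < ε i)
    (hτ : ∀ i, 0 < τ i) (k : Fin P)
    (hk : ε k ≤ ε' k) (hother : ∀ i, i ≠ k → ε' i = ε i)
    (t t' : Fin P → ℝ)
    (htfeas : (∀ i, 0 ≤ t i) ∧ ∑ i, t i = T)
    (ht'feas : (∀ i, 0 ≤ t' i) ∧ ∑ i, t' i = T)
    (htmax : ∀ s : Fin P → ℝ, (∀ i, 0 ≤ s i) ∧ ∑ i, s i = T →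
      ∑ i, ε i * (1 - Real.exp (-s i / τ i)) ≤
        ∑ i, ε i * (1 - Real.exp (-t i / τ i)))
    (ht'max : ∀ s : Fin P → ℝ, (∀ i, 0 ≤ s i) ∧ ∑ i, s i = T →
      ∑ i, ε' i * (1 - Real.exp (-s i / τ i)) ≤
        ∑ i, ε' i * (1 - Real.exp (-t' i / τ i))) :
    t k ≤ t' k := by
  have hmax : IsMaxOn (weightedSaturation ε τ) (allocations (Fin P) T) t := isMaxOn_iff.mpr htmax
  have hmax' : IsMaxOn (weightedSaturation ε' τ) (allocations (Fin P) T) t' :=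
    isMaxOn_iff.mpr ht'max
  rcases hk.lt_or_eq with hlt | heq
  · rw [weightedSaturation_eq_add τ hother] at hmax'
    have hcross := hmax.le_of_isMaxOn_add hmax' htfeas ht'feas
    exact (strictMono_saturation (hτ k)).le_iff_le.mp
      (le_of_mul_le_mul_left hcross (sub_pos.mpr hlt))
  · obtain rfl : ε' = ε := funext fun i ↦
      if hik : i = k then hik ▸ heq.symm else hother i hik
    have hconcave := (strictConcaveOn_weightedSaturation hε hτ).subset (subset_univ _)
      (convex_allocations T)
    exact (congrFun (hconcave.eq_of_isMaxOn hmax hmax' htfeas ht'feas) k).le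

/-- Monotone comparative statics: increasing the weight `ε_k` of a single target
(holding the other weights, the `τ_i` and `T` fixed) does not decrease the optimal
time allocated to that target. -/
theorem stmt12 (P : ℕ) (hP : 1 ≤ P) (T : ℝ) (hT : 0 < T)
    (ε ε' τ : Fin P → ℝ) (hε : ∀ i, 0 < ε i) (hε' : ∀ i, 0 < ε' i)
    (hτ : ∀ i, 0 < τ i) (k : Fin P)
    (hk : ε k ≤ ε' k) (hother : ∀ i, i ≠ k → ε' i = ε i)
    (t t' : Fin P → ℝ)
    (htfeas : (∀ i, 0 ≤ t i) ∧ ∑ i, t i = T)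
    (ht'feas : (∀ i, 0 ≤ t' i) ∧ ∑ i, t' i = T)
    (htmax : ∀ s : Fin P → ℝ, (∀ i, 0 ≤ s i) ∧ ∑ i, s i = T →
      ∑ i, ε i * (1 - Real.exp (-s i / τ i)) ≤
        ∑ i, ε i * (1 - Real.exp (-t i / τ i)))
    (ht'max : ∀ s : Fin P → ℝ, (∀ i, 0 ≤ s i) ∧ ∑ i, s i = T →
      ∑ i, ε' i * (1 - Real.exp (-s i / τ i)) ≤
        ∑ i, ε' i * (1 - Real.exp (-t' i / τ i))) :
    t k ≤ t' k :=
  stmt12_general P T ε ε' τ hε hτ k hk hother t t' htfeas ht'feas htmax ht'max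
end

section
/- Let n > 0. The equation (1 - e^{-γ}) ln(1 - e^{-γ}) + n γ e^{-γ} = 0 has a unique solution γ > 0. -/
open Real Set

/-!
With `v = 1 - e^{-γ} ∈ (0, 1)` the equation reads `v log v = n (1 - v) log (1 - v)`, that is
`L v = n L (1 - v)` for the secant slope `L x = log x / (x - 1)` of `log` between `x` and `1`.
Strict concavity of `log` makes `L` strictly decreasing on `(0, 1)`, so `L v - n L (1 - v)` is
strictly decreasing there and vanishes at most once; the bound `L x ≤ 1 / x` shows that it is
`≥ 0` at `e^{-n}` and `≤ 0` at `1 - e^{-1/n}`, and the intermediate value theorem gives a zero.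
-/

noncomputable def logSlope (x : ℝ) : ℝ := log x / (x - 1)

lemma logSlope_strictAntiOn : StrictAntiOn logSlope (Ioo 0 1) := by
  intro x hx y hy hxy
  have h := strictConcaveOn_log_Ioi.secant_strict_mono (a := 1) (mem_Ioi.2 one_pos)
    (mem_Ioi.2 hx.1) (mem_Ioi.2 hy.1) hx.2.ne hy.2.ne hxy
  simpa [logSlope] using h

lemma logSlope_le_inv {x : ℝ} (hx : x ∈ Ioo 0 1) : logSlope x ≤ x⁻¹ := by
  rw [logSlope, div_le_iff_of_neg (by linarith [hx.2])]
  have := one_sub_inv_le_log_of_pos hx.1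
  have : x⁻¹ * x = 1 := inv_mul_cancel₀ hx.1.ne'
  linarith

lemma continuousOn_logSlope : ContinuousOn logSlope (Ioo 0 1) :=
  (continuousOn_log.mono fun _ hx => hx.1.ne').div (by fun_prop) fun _ hx => by linarith [hx.2]

lemma exp_neg_mem_Ioo {t : ℝ} (ht : 0 < t) : exp (-t) ∈ Ioo 0 1 :=
  ⟨exp_pos _, exp_lt_one_iff.2 (neg_lt_zero.2 ht)⟩

lemma one_sub_exp_neg_mem_Ioo {t : ℝ} (ht : 0 < t) : 1 - exp (-t) ∈ Ioo 0 1 :=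
  Ioo.one_sub_mem (exp_neg_mem_Ioo ht)

lemma mul_logSlope_one_sub_exp_neg_le {t : ℝ} (ht : 0 < t) :
    t * logSlope (1 - exp (-t)) ≤ logSlope (exp (-t)) :=
  calc t * logSlope (1 - exp (-t)) ≤ t * (1 - exp (-t))⁻¹ :=
        mul_le_mul_of_nonneg_left (logSlope_le_inv (one_sub_exp_neg_mem_Ioo ht)) ht.le
    _ = logSlope (exp (-t)) := by
        rw [logSlope, log_exp, ← neg_div_neg_eq, neg_neg, neg_sub, div_eq_mul_inv]

noncomputable def logSlopeGap (c v : ℝ) : ℝ := logSlope v - c * logSlope (1 - v)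

lemma logSlopeGap_strictAntiOn {c : ℝ} (hc : 0 ≤ c) : StrictAntiOn (logSlopeGap c) (Ioo 0 1) := by
  intro x hx y hy hxy
  have h₁ := logSlope_strictAntiOn hx hy hxy
  have h₂ := logSlope_strictAntiOn (Ioo.one_sub_mem hy) (Ioo.one_sub_mem hx) (by linarith)
  unfold logSlopeGap
  nlinarith [mul_le_mul_of_nonneg_left h₂.le hc]

lemma continuousOn_logSlopeGap (c : ℝ) : ContinuousOn (logSlopeGap c) (Ioo 0 1) :=
  continuousOn_logSlope.sub <| continuousOn_const.mul <|
    continuousOn_logSlope.comp (by fun_prop) fun _ hv => Ioo.one_sub_mem hv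

lemma exists_logSlopeGap_eq_zero {c : ℝ} (hc : 0 < c) : ∃ v ∈ Ioo 0 1, logSlopeGap c v = 0 := by
  have hpos : 0 ≤ logSlopeGap c (exp (-c)) := by
    have := mul_logSlope_one_sub_exp_neg_le hc
    unfold logSlopeGap
    linarith
  have hneg : logSlopeGap c (1 - exp (-c⁻¹)) ≤ 0 := by
    have := mul_le_mul_of_nonneg_left (mul_logSlope_one_sub_exp_neg_le (inv_pos.2 hc)) hc.le
    rw [← mul_assoc, mul_inv_cancel₀ hc.ne', one_mul] at this
    unfold logSlopeGap
    rw [sub_sub_cancel]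
    linarith
  exact isPreconnected_Ioo.intermediate_value (one_sub_exp_neg_mem_Ioo (inv_pos.2 hc))
    (exp_neg_mem_Ioo hc) (continuousOn_logSlopeGap c) ⟨hneg, hpos⟩

lemma mul_log_sub_mul_eq_logSlopeGap (c : ℝ) {v : ℝ} (hv : v ∈ Ioo 0 1) :
    v * log v - c * ((1 - v) * log (1 - v)) = -(v * (1 - v)) * logSlopeGap c v := by
  have h₁ : v - 1 ≠ 0 := by linarith [hv.2]
  have h₂ : 1 - v - 1 ≠ 0 := by linarith [hv.1]
  unfold logSlopeGap logSlope
  field_simp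
  ring

lemma mul_log_one_sub_exp_neg_add_eq_zero_iff (c : ℝ) {γ : ℝ} (hγ : 0 < γ) :
    (1 - exp (-γ)) * log (1 - exp (-γ)) + c * γ * exp (-γ) = 0 ↔
      logSlopeGap c (1 - exp (-γ)) = 0 := by
  have hv := one_sub_exp_neg_mem_Ioo hγ
  have key := mul_log_sub_mul_eq_logSlopeGap c hv
  rw [sub_sub_cancel, log_exp] at key
  rw [show (1 - exp (-γ)) * log (1 - exp (-γ)) + c * γ * exp (-γ) =
    -((1 - exp (-γ)) * exp (-γ)) * logSlopeGap c (1 - exp (-γ)) by linear_combination key]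
  exact mul_eq_zero_iff_left (neg_ne_zero.2 (mul_pos hv.1 (exp_pos _)).ne')

/-- For `n > 0`, the equation `(1 - e^{-γ}) ln(1 - e^{-γ}) + n γ e^{-γ} = 0` has a
unique solution `γ > 0`. -/
theorem stmt15 (n : ℝ) (hn : 0 < n) :
    ∃! γ : ℝ, 0 < γ ∧
      (1 - Real.exp (-γ)) * Real.log (1 - Real.exp (-γ)) +
        n * γ * Real.exp (-γ) = 0 := by
  obtain ⟨v, hv, hroot⟩ := exists_logSlopeGap_eq_zero hn
  have hv' := Ioo.one_sub_mem hv
  have hγ : 0 < -log (1 - v) := neg_pos.2 (log_neg hv'.1 hv'.2)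
  have hexp : exp (-(-log (1 - v))) = 1 - v := by rw [neg_neg, exp_log hv'.1]
  refine ⟨-log (1 - v), ⟨hγ, ?_⟩, ?_⟩
  · rw [mul_log_one_sub_exp_neg_add_eq_zero_iff n hγ, hexp, sub_sub_cancel, hroot]
  rintro γ ⟨hγ', h⟩
  have hvγ : 1 - exp (-γ) = v :=
    (logSlopeGap_strictAntiOn hn.le).injOn (one_sub_exp_neg_mem_Ioo hγ') hv
      (((mul_log_one_sub_exp_neg_add_eq_zero_iff n hγ').1 h).trans hroot.symm)
  rw [← hvγ, sub_sub_cancel, log_exp, neg_neg]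
end
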